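/- Let Δ ⊂ ℝ^4 be the root system of F_4 and H_1,…,H_4 the dual basis of the simple roots α_1,…,α_4. For nonempty I ⊆ {1,2,3,4} set ξ_I = Σ_{i∈I} H_i (these are exactly the symmetric canonical elements of F_4). Then the number of roots α ∈ Δ with ⟨α, ξ_I⟩ an odd integer equals 16 (= dim F_4/Spin(9), so that N_{ξ_I} is the Cayley plane 𝕆P² = F_4/Spin(9)) if and only if ξ_I ∈ {H_3, H_4, H_3+H_4}. Moreover, for ω* = α_1+2α_2+3α_3+2α_4 (the highest weight of the 26-dimensional representation of F_4, which is self-dual), the uniton numbers 2⟨ω*, ξ⟩ equal 4, 6 and 10 for ξ = H_4, H_3 and H_3+H_4 respectively. -/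

import Mathlib

/-!
Doubling turns every root of `F₄` into an integer vector `2α`, and the dual basis `H₁, …, H₄`
is integral: it is `(1,1,0,0), (2,1,1,0), (3,1,1,1), (2,0,0,0)`. Hence `⟨α, ξ_I⟩` is an odd
integer iff `⟨2α, ξ_I⟩ ≡ 2 (mod 4)`, and counting such roots for the fifteen sets `I` is a
finite computation over integer vectors. For the uniton numbers, `ω* = e₁`, so `2⟨ω*, ξ⟩` is
twice the first coordinate of `ξ`.
-/

/-- The Euclidean pairing on `ℝ^4`. -/
def dotR (v w : Fin 4 → ℝ) : ℝ := ∑ i, v i * w i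

/-- Standard basis vector `e_i` of `ℝ^4`. -/
def stdE (i : Fin 4) : Fin 4 → ℝ := fun j => if j = i then 1 else 0

/-- The root system of `F_4` in `ℝ^4`:
`{±e_i} ∪ {±e_i ± e_j : i < j} ∪ {(±e_1±e_2±e_3±e_4)/2}` (48 roots). -/
def F4roots : Set (Fin 4 → ℝ) :=
  {v | ∃ (i : Fin 4) (ε : ℝ), (ε = 1 ∨ ε = -1) ∧ v = ε • stdE i} ∪
  {v | ∃ (i j : Fin 4) (ε δ : ℝ), i < j ∧ (ε = 1 ∨ ε = -1) ∧ (δ = 1 ∨ δ = -1) ∧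
    v = ε • stdE i + δ • stdE j} ∪
  {v | ∃ s : Fin 4 → ℝ, (∀ i, s i = 1 ∨ s i = -1) ∧ v = fun i => s i / 2}

/-- The simple roots of `F_4` (1-based index): `α₁ = e₂-e₃`, `α₂ = e₃-e₄`,
`α₃ = e₄`, `α₄ = (e₁-e₂-e₃-e₄)/2`. -/
noncomputable def alphaF4 : ℕ → Fin 4 → ℝ
  | 1 => ![0, 1, -1, 0]
  | 2 => ![0, 0, 1, -1]
  | 3 => ![0, 0, 0, 1]
  | 4 => ![1/2, -1/2, -1/2, -1/2]
  | _ => 0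

open Finset

lemma dotR_eq_dotProduct (v w : Fin 4 → ℝ) : dotR v w = v ⬝ᵥ w := rfl

lemma intCast_comp_sum {n ι R : Type*} [AddCommGroupWithOne R] (s : Finset ι) (f : ι → n → ℤ) :
    (Int.cast ∘ ∑ i ∈ s, f i : n → R) = ∑ i ∈ s, Int.cast ∘ f i :=
  map_sum ((Int.castAddHom R).compLeft n) f s

noncomputable def halve {n : Type*} (v : n → ℤ) : n → ℝ := fun i => (v i : ℝ) / 2

lemma halve_injective {n : Type*} : Function.Injective (halve : (n → ℤ) → n → ℝ) :=
  fun _ _ h => funext fun i => by exact_mod_cast (div_left_inj' (two_ne_zero' ℝ)).1 (congrFun h i)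

lemma halve_add {n : Type*} (v w : n → ℤ) : halve (v + w) = halve v + halve w := by
  funext i
  simp only [halve, Pi.add_apply, Int.cast_add, add_div]

lemma halve_dotProduct_intCast {n : Type*} [Fintype n] (v w : n → ℤ) :
    halve v ⬝ᵥ (Int.cast ∘ w) = ((v ⬝ᵥ w : ℤ) : ℝ) / 2 := by
  simp only [dotProduct, halve, Function.comp_apply]
  push_cast
  rw [sum_div]
  exact sum_congr rfl fun i _ => by ring

lemma exists_odd_eq_half_iff (k : ℤ) : (∃ m : ℤ, Odd m ∧ (k : ℝ) / 2 = m) ↔ k % 4 = 2 := by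
  constructor
  · rintro ⟨m, ⟨j, rfl⟩, h⟩
    have hkR : (k : ℝ) = 2 * (2 * j + 1) := by
      push_cast at h
      linarith
    have hk : k = 2 * (2 * j + 1) := by exact_mod_cast hkR
    omega
  · intro h
    refine ⟨k / 2, Int.odd_iff.2 (by omega), ?_⟩
    rw [Int.cast_div (by omega) two_ne_zero]
    norm_num

def signs : Finset ℤ := {1, -1}

lemma eq_one_or_eq_neg_one_iff (ε : ℝ) : (ε = 1 ∨ ε = -1) ↔ ∃ s ∈ signs, (s : ℝ) = ε := by
  simp only [signs, mem_insert, mem_singleton, exists_eq_or_imp, exists_eq_left]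
  push_cast
  exact ⟨Or.imp Eq.symm Eq.symm, Or.imp Eq.symm Eq.symm⟩

lemma halve_two_mul_smul_single (s : ℤ) (i : Fin 4) :
    halve ((2 * s) • Pi.single i 1 : Fin 4 → ℤ) = (s : ℝ) • stdE i := by
  funext j
  simp only [halve, stdE, Pi.smul_apply, Pi.single_apply, smul_eq_mul]
  split_ifs <;> push_cast <;> ring

def doubledAxisRoots : Finset (Fin 4 → ℤ) :=
  (univ ×ˢ signs).image fun p => (2 * p.2) • Pi.single p.1 1

def doubledLongRoots : Finset (Fin 4 → ℤ) :=
  ((univ.filter fun p : Fin 4 × Fin 4 => p.1 < p.2) ×ˢ signs ×ˢ signs).image fun p =>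
    (2 * p.2.1) • Pi.single p.1.1 1 + (2 * p.2.2) • Pi.single p.1.2 1

def doubledRootsF4 : Finset (Fin 4 → ℤ) :=
  doubledAxisRoots ∪ doubledLongRoots ∪ Fintype.piFinset fun _ => signs

lemma setOf_smul_stdE_eq_image_halve :
    {v | ∃ (i : Fin 4) (ε : ℝ), (ε = 1 ∨ ε = -1) ∧ v = ε • stdE i} =
      halve '' doubledAxisRoots := by
  rw [doubledAxisRoots, coe_image, Set.image_image]
  ext v
  simp only [Set.mem_ofPred_eq, Set.mem_image, mem_coe, mem_product, mem_univ,
    true_and, Prod.exists, eq_one_or_eq_neg_one_iff, halve_two_mul_smul_single]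
  constructor
  · rintro ⟨i, _, ⟨s, hs, rfl⟩, rfl⟩
    exact ⟨i, s, hs, rfl⟩
  · rintro ⟨i, s, hs, rfl⟩
    exact ⟨i, s, ⟨s, hs, rfl⟩, rfl⟩

lemma setOf_add_smul_stdE_eq_image_halve :
    {v | ∃ (i j : Fin 4) (ε δ : ℝ), i < j ∧ (ε = 1 ∨ ε = -1) ∧ (δ = 1 ∨ δ = -1) ∧
      v = ε • stdE i + δ • stdE j} =
      halve '' doubledLongRoots := by
  rw [doubledLongRoots, coe_image, Set.image_image]
  ext v
  simp only [Set.mem_ofPred_eq, Set.mem_image, mem_coe, mem_product, mem_filter,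
    mem_univ, true_and, Prod.exists, eq_one_or_eq_neg_one_iff, halve_add, halve_two_mul_smul_single]
  constructor
  · rintro ⟨i, j, _, _, hij, ⟨s, hs, rfl⟩, ⟨t, ht, rfl⟩, rfl⟩
    exact ⟨i, j, s, t, ⟨hij, hs, ht⟩, rfl⟩
  · rintro ⟨i, j, s, t, ⟨hij, hs, ht⟩, rfl⟩
    exact ⟨i, j, s, t, hij, ⟨s, hs, rfl⟩, ⟨t, ht, rfl⟩, rfl⟩

lemma setOf_half_signs_eq_image_halve :
    {v | ∃ s : Fin 4 → ℝ, (∀ i, s i = 1 ∨ s i = -1) ∧ v = fun i => s i / 2} =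
      halve '' (Fintype.piFinset fun _ : Fin 4 => signs : Set (Fin 4 → ℤ)) := by
  ext v
  simp only [Set.mem_ofPred_eq, Set.mem_image, mem_coe, Fintype.mem_piFinset,
    eq_one_or_eq_neg_one_iff]
  constructor
  · rintro ⟨s, hs, rfl⟩
    choose t ht using hs
    exact ⟨t, fun i => (ht i).1, funext fun i => by simp only [halve, (ht i).2]⟩
  · rintro ⟨t, ht, rfl⟩
    exact ⟨Int.cast ∘ t, fun i => ⟨t i, ht i, rfl⟩, rfl⟩

lemma F4roots_eq_image_halve : F4roots = halve '' doubledRootsF4 := by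
  rw [F4roots, doubledRootsF4, coe_union, coe_union, Set.image_union, Set.image_union,
    setOf_smul_stdE_eq_image_halve, setOf_add_smul_stdE_eq_image_halve,
    setOf_half_signs_eq_image_halve]

lemma ncard_oddRoots_eq_card (w : Fin 4 → ℤ) :
    {α ∈ F4roots | ∃ m : ℤ, Odd m ∧ dotR α (Int.cast ∘ w) = m}.ncard =
      #{v ∈ doubledRootsF4 | (v ⬝ᵥ w) % 4 = 2} := by
  have hodd : {α ∈ F4roots | ∃ m : ℤ, Odd m ∧ dotR α (Int.cast ∘ w) = m} =
      halve '' ↑{v ∈ doubledRootsF4 | (v ⬝ᵥ w) % 4 = 2} := by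
    ext α
    simp only [F4roots_eq_image_halve, coe_filter, Set.mem_image, Set.mem_ofPred_eq, mem_coe]
    constructor
    · rintro ⟨⟨v, hv, rfl⟩, hm⟩
      rw [dotR_eq_dotProduct, halve_dotProduct_intCast, exists_odd_eq_half_iff] at hm
      exact ⟨v, ⟨hv, hm⟩, rfl⟩
    · rintro ⟨v, ⟨hv, hm⟩, rfl⟩
      rw [dotR_eq_dotProduct, halve_dotProduct_intCast, exists_odd_eq_half_iff]
      exact ⟨⟨v, hv, rfl⟩, hm⟩
  rw [hodd, Set.ncard_image_of_injective _ halve_injective, Set.ncard_coe_finset]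

def coweightF4 : ℕ → Fin 4 → ℤ
  | 1 => ![1, 1, 0, 0]
  | 2 => ![2, 1, 1, 0]
  | 3 => ![3, 1, 1, 1]
  | 4 => ![2, 0, 0, 0]
  | _ => 0

lemma dotR_alphaF4_coweightF4 : ∀ i ∈ Icc 1 4, ∀ j ∈ Icc 1 4,
    dotR (alphaF4 i) (Int.cast ∘ coweightF4 j) = if i = j then 1 else 0 := by
  simp only [mem_Icc]
  rintro i ⟨hi1, hi4⟩ j ⟨hj1, hj4⟩
  interval_cases i <;> interval_cases j <;>
    norm_num [dotR, alphaF4, coweightF4, Fin.sum_univ_four, Matrix.cons_val_two,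
      Matrix.cons_val_three]

lemma eq_of_dotR_alphaF4_eq {v w : Fin 4 → ℝ}
    (h : ∀ i ∈ Icc 1 4, dotR (alphaF4 i) v = dotR (alphaF4 i) w) : v = w := by
  have h1 := h 1 (by decide)
  have h2 := h 2 (by decide)
  have h3 := h 3 (by decide)
  have h4 := h 4 (by decide)
  norm_num [dotR, alphaF4, Fin.sum_univ_four, Matrix.cons_val_two, Matrix.cons_val_three]
    at h1 h2 h3 h4
  funext k
  fin_cases k <;> simp only [Fin.zero_eta, Fin.mk_one, Fin.reduceFinMk] <;> linarith

lemma omegaF4_eq_stdE :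
    alphaF4 1 + (2 : ℝ) • alphaF4 2 + (3 : ℝ) • alphaF4 3 + (2 : ℝ) • alphaF4 4 = stdE 0 := by
  funext k
  fin_cases k <;> norm_num [alphaF4, stdE]

lemma dotR_stdE (i : Fin 4) (v : Fin 4 → ℝ) : dotR (stdE i) v = v i := by
  simp [dotR, stdE]

theorem card_oddDoubledRoots_eq_16_iff : ∀ I ∈ (Icc 1 4).powerset, I.Nonempty →
    (#{v ∈ doubledRootsF4 | (v ⬝ᵥ ∑ i ∈ I, coweightF4 i) % 4 = 2} = 16 ↔
      ∑ i ∈ I, coweightF4 i ∈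
        ({coweightF4 3, coweightF4 4, coweightF4 3 + coweightF4 4} : Finset _)) := by
  decide

/-- For the dual basis `H_1,…,H_4` of the simple roots of `F_4`
and `ξ_I = Σ_{i∈I} H_i` (the symmetric canonical elements of `F_4`): the number of
roots pairing to an odd integer with `ξ_I` equals `16 = dim F₄/Spin(9)` iff
`ξ_I ∈ {H₃, H₄, H₃+H₄}`; and for `ω* = α₁+2α₂+3α₃+2α₄` the uniton numbers
`2⟨ω*, ξ⟩` are `4, 6, 10` for `ξ = H₄, H₃, H₃+H₄`. -/
theorem f4_cayley_plane (H : ℕ → Fin 4 → ℝ)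
    (hH : ∀ i ∈ Finset.Icc 1 4, ∀ j ∈ Finset.Icc 1 4,
      dotR (alphaF4 i) (H j) = if i = j then 1 else 0) :
    (∀ I : Finset ℕ, I ⊆ Finset.Icc 1 4 → I.Nonempty →
      (({α ∈ F4roots | ∃ m : ℤ, Odd m ∧ dotR α (∑ i ∈ I, H i) = m}.ncard = 16) ↔
        (∑ i ∈ I, H i) ∈ ({H 3, H 4, H 3 + H 4} : Set (Fin 4 → ℝ)))) ∧
    2 * dotR (alphaF4 1 + (2 : ℝ) • alphaF4 2 + (3 : ℝ) • alphaF4 3 +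
        (2 : ℝ) • alphaF4 4) (H 4) = 4 ∧
    2 * dotR (alphaF4 1 + (2 : ℝ) • alphaF4 2 + (3 : ℝ) • alphaF4 3 +
        (2 : ℝ) • alphaF4 4) (H 3) = 6 ∧
    2 * dotR (alphaF4 1 + (2 : ℝ) • alphaF4 2 + (3 : ℝ) • alphaF4 3 +
        (2 : ℝ) • alphaF4 4) (H 3 + H 4) = 10 := by
  have hHw : ∀ j ∈ Icc 1 4, H j = Int.cast ∘ coweightF4 j := fun j hj =>
    eq_of_dotR_alphaF4_eq fun i hi =>
      (hH i hi j hj).trans (dotR_alphaF4_coweightF4 i hi j hj).symm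
  have hH3 := hHw 3 (by decide)
  have hH4 := hHw 4 (by decide)
  have hH34 : H 3 + H 4 = Int.cast ∘ (coweightF4 3 + coweightF4 4) := by
    funext k
    simp [hH3, hH4]
  refine ⟨fun I hI hne => ?_, ?_, ?_, ?_⟩
  · have hsum : ∑ i ∈ I, H i = Int.cast ∘ ∑ i ∈ I, coweightF4 i := by
      rw [intCast_comp_sum]
      exact sum_congr rfl fun i hi => hHw i (hI hi)
    rw [hsum, ncard_oddRoots_eq_card, hH34, hH3, hH4,
      card_oddDoubledRoots_eq_16_iff I (mem_powerset.2 hI) hne]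
    simp only [Set.mem_insert_iff, Set.mem_singleton_iff, mem_insert, mem_singleton,
      Int.cast_injective.comp_left.eq_iff]
  all_goals
    rw [omegaF4_eq_stdE, dotR_stdE]
    norm_num [hH3, hH4, hH34, coweightF4]
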